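/- Let d > 2, let f ∈ C^d(ℝ^d) with singsupp(f) = {0, y} for some y ≠ 0, and let g = δ₀ + δ_y^{(1)} ∈ C^{−d−1}(ℝ^d), where δ₀ is the Dirac delta centered at the origin and δ_y^{(1)} is a first-order distributional derivative of the Dirac delta centered at y. Then the canonical product f·g ∈ D'(ℝ^d) exists, even though the classical Young condition α + β > 0 fails (here α + β = −1). -/

import Mathlib

open MeasureTheory Real Set Filter Metric
open scoped ENNReal NNReal Topology BigOperators

noncomputable section

/-- Euclidean space `ℝ^d`. -/
abbrev Ed (d : ℕ) := EuclideanSpace ℝ (Fin d)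

/-- A (model for a) distribution on `ℝ^d`: a linear functional on functions,
whose relevant values are those on test functions. -/
abbrev Distr (d : ℕ) := (Ed d → ℝ) →ₗ[ℝ] ℝ

variable {d : ℕ}

/-- A test function: smooth and compactly supported. -/
def IsTestFunction (φ : Ed d → ℝ) : Prop :=
  ContDiff ℝ (⊤ : ℕ∞) φ ∧ HasCompactSupport φ

/-- The scaled and translated test function `φ^λ_x(y) = λ^{-d} φ((x - y)/λ)`. -/
def scaleTF (φ : Ed d → ℝ) (x : Ed d) (l : ℝ) : Ed d → ℝ :=
  fun y => l ^ (-(d : ℤ)) * φ (l⁻¹ • (x - y))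

/-- The scaling `f^λ_{x₀}(y) = λ^{-d} f(λ⁻¹ (y - x₀))` used for the scaling degree. -/
def sdScaleFun (f : Ed d → ℝ) (x₀ : Ed d) (l : ℝ) : Ed d → ℝ :=
  fun y => l ^ (-(d : ℤ)) * f (l⁻¹ • (y - x₀))

/-- `⌊α⌋ = max {n : ℤ | n < α}`. -/
def lfloor (α : ℝ) : ℤ := ⌈α⌉ - 1

/-- The class `B^r` of test functions supported in the unit ball with `C^r`-norm at most 1. -/
def InBr (r : ℕ) (φ : Ed d → ℝ) : Prop :=
  IsTestFunction φ ∧ tsupport φ ⊆ Metric.ball (0 : Ed d) 1 ∧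
    ∀ k ≤ r, ∀ x, ‖iteratedFDeriv ℝ k φ x‖ ≤ 1

/-- The class `B^r_m` of elements of `B^r` whose moments of order `≤ m` vanish. -/
def InBrM (r : ℕ) (m : ℤ) (φ : Ed d → ℝ) : Prop :=
  InBr r φ ∧ ∀ k : Fin d → ℕ, ((∑ i, k i : ℤ) ≤ m) →
    (∫ x : Ed d, (∏ i, x i ^ k i) * φ x) = 0

/-- Taylor polynomial of order `n` of `f` centered at `x`, evaluated at `y`. -/
def taylorPoly (f : Ed d → ℝ) (x y : Ed d) (n : ℕ) : ℝ :=
  ∑ k ∈ Finset.range (n + 1),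
    ((k.factorial : ℝ))⁻¹ * iteratedFDeriv ℝ k f x (fun _ => y - x)

/-- Local Hölder regularity `C^α_loc` for functions, `α > 0`. -/
def HolderFunLoc (α : ℝ) (f : Ed d → ℝ) : Prop :=
  ContDiff ℝ ((lfloor α).toNat : ℕ∞) f ∧
    ∀ K : Set (Ed d), IsCompact K → ∃ C : ℝ, ∀ x ∈ K, ∀ y ∈ K,
      |f y - taylorPoly f x y (lfloor α).toNat| ≤ C * ‖x - y‖ ^ α

/-- Hölder regularity `C^β` (uniformly on every compact) for distributions, `β < 0`. -/
def HolderDistOn (u : Distr d) (β : ℝ) : Prop :=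
  ∀ K : Set (Ed d), IsCompact K → ∃ C : ℝ, ∀ x ∈ K, ∀ l ∈ Set.Ioc (0 : ℝ) 1,
    ∀ φ : Ed d → ℝ, InBr (-(lfloor β)).toNat φ → |u (scaleTF φ x l)| ≤ C * l ^ β

/-- Membership of a distribution in `C^α_loc` for a general real `α`. -/
def MemHolderLoc (u : Distr d) (α : ℝ) : Prop :=
  (0 < α → ∃ f : Ed d → ℝ, HolderFunLoc α f ∧
      ∀ ψ, IsTestFunction ψ → u ψ = ∫ x, f x * ψ x) ∧
  (α ≤ 0 → HolderDistOn u α)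

/-- Hölder seminorm `‖f‖_{C^α(K)}` for `α > 0`. -/
def holderPosSeminorm (f : Ed d → ℝ) (α : ℝ) (K : Set (Ed d)) : ℝ :=
  max (sSup {v : ℝ | ∃ k ≤ (lfloor α).toNat, ∃ x ∈ K, v = ‖iteratedFDeriv ℝ k f x‖})
      (sSup {v : ℝ | ∃ x ∈ K, ∃ y ∈ K,
        v = |f y - taylorPoly f x y (lfloor α).toNat| / ‖x - y‖ ^ α})

/-- Hölder seminorm `‖u‖_{C^β(K)}` for `β < 0`. -/
def holderNegSeminorm (u : Distr d) (β : ℝ) (K : Set (Ed d)) : ℝ :=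
  sSup {v : ℝ | ∃ x ∈ K, ∃ l ∈ Set.Ioc (0 : ℝ) 1, ∃ φ, InBr (-(lfloor β)).toNat φ ∧
    v = |u (scaleTF φ x l)| / l ^ β}

/-- `L^p`-type quantity (in `ℝ≥0∞`) of `g` on a set `K`. -/
def lpOn (p : ℝ≥0∞) (K : Set (Ed d)) (g : Ed d → ℝ≥0∞) : ℝ≥0∞ :=
  if p = ∞ then essSup g (volume.restrict K)
  else (∫⁻ x in K, g x ^ p.toReal) ^ (1 / p.toReal)

/-- `ℓ^q`-type quantity (in `ℝ≥0∞`) of a sequence. -/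
def lqSeq (q : ℝ≥0∞) (a : ℕ → ℝ≥0∞) : ℝ≥0∞ :=
  if q = ∞ then ⨆ n, a n else (∑' n, a n ^ q.toReal) ^ (1 / q.toReal)

/-- The Besov integrand `sup_{ψ ∈ B^r} |u(ψ^{2^{-n}}_x)| / 2^{-nγ}` for negative regularity. -/
def besovTermNeg (u : Distr d) (γ : ℝ) (r : ℕ) (n : ℕ) (x : Ed d) : ℝ≥0∞ :=
  ⨆ φ ∈ {φ : Ed d → ℝ | InBr r φ},
    ENNReal.ofReal (|u (scaleTF φ x ((2 : ℝ) ^ (-(n : ℤ))))| * (2 : ℝ) ^ ((n : ℝ) * γ))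

/-- The Besov integrand `sup_{ψ ∈ B^r_{⌊α⌋}} |u(ψ^{2^{-n}}_x)| / 2^{-nα}`. -/
def besovTermPos (u : Distr d) (α : ℝ) (r : ℕ) (n : ℕ) (x : Ed d) : ℝ≥0∞ :=
  ⨆ φ ∈ {φ : Ed d → ℝ | InBrM r (lfloor α) φ},
    ENNReal.ofReal (|u (scaleTF φ x ((2 : ℝ) ^ (-(n : ℤ))))| * (2 : ℝ) ^ ((n : ℝ) * α))

/-- The Besov integrand `sup_{ψ ∈ B^r} |u(ψ_x)|`. -/
def besovTermUnit (u : Distr d) (r : ℕ) (x : Ed d) : ℝ≥0∞ :=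
  ⨆ φ ∈ {φ : Ed d → ℝ | InBr r φ}, ENNReal.ofReal |u (scaleTF φ x 1)|

/-- Local Besov space `B^γ_{p,q,loc}(ℝ^d)`, negative-regularity characterization. -/
def MemBesovLocNeg (u : Distr d) (γ : ℝ) (p q : ℝ≥0∞) : Prop :=
  ∃ r : ℕ, (r : ℝ) > -γ ∧ ∀ K : Set (Ed d), IsCompact K →
    lqSeq q (fun n => lpOn p K (besovTermNeg u γ r n)) < ∞

/-- Global Besov space `B^γ_{p,q}(ℝ^d)`, negative-regularity characterization. -/
def MemBesovNeg (u : Distr d) (γ : ℝ) (p q : ℝ≥0∞) : Prop :=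
  ∃ r : ℕ, (r : ℝ) > -γ ∧ lqSeq q (fun n => lpOn p Set.univ (besovTermNeg u γ r n)) < ∞

/-- Local Besov space `B^α_{p,q,loc}(ℝ^d)`, nonnegative-regularity characterization. -/
def MemBesovLocPos (u : Distr d) (α : ℝ) (p q : ℝ≥0∞) : Prop :=
  ∃ r : ℕ, (r : ℝ) > -α ∧ ∀ K : Set (Ed d), IsCompact K →
    lpOn p K (besovTermUnit u r) < ∞ ∧
    lqSeq q (fun n => lpOn p K (besovTermPos u α r n)) < ∞

/-- `β*_g = sup {γ ≤ 0 : g ∈ B^γ_{p,∞,loc} for some p ∈ [2,∞]}`. -/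
def betaStar (g : Distr d) : ℝ :=
  sSup {γ : ℝ | γ ≤ 0 ∧ ∃ p : ℝ≥0∞, 2 ≤ p ∧ MemBesovLocNeg g γ p ∞}

/-- Multiplication of a distribution by a function: `(h·u)(ψ) = u(hψ)`. -/
def mulD (h : Ed d → ℝ) (u : Distr d) : Distr d :=
  u.comp (LinearMap.mulLeft ℝ h)

/-- The Fourier transform of a (compactly supported) distribution, as a function. -/
def distFourier (u : Distr d) (ξ : Ed d) : ℂ :=
  (u (fun x => Real.cos (2 * π * (inner ℝ x ξ : ℝ))) : ℂ) -
    (u (fun x => Real.sin (2 * π * (inner ℝ x ξ : ℝ))) : ℂ) * Complex.I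

/-- The Japanese bracket weight `⟨ξ⟩^{2s} = (1 + |ξ|²)^s`. -/
def japBr (ξ : Ed d) (s : ℝ) : ℝ≥0∞ := ENNReal.ofReal ((1 + ‖ξ‖ ^ 2) ^ s)

/-- `H^s(ℝ^d)` membership for a compactly supported distribution. -/
def MemHsCompact (v : Distr d) (s : ℝ) : Prop :=
  (∫⁻ ξ : Ed d, japBr ξ s * (‖distFourier v ξ‖₊ : ℝ≥0∞) ^ 2) < ∞

/-- `H^s_loc(ℝ^d)` membership: every localization lies in `H^s`. -/
def MemHsLoc (u : Distr d) (s : ℝ) : Prop :=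
  ∀ φ : Ed d → ℝ, IsTestFunction φ → MemHsCompact (mulD φ u) s

/-- A conic subset of `ℝ^d`. -/
def IsConicSet (Γ : Set (Ed d)) : Prop := ∀ ξ ∈ Γ, ∀ t : ℝ, 0 < t → t • ξ ∈ Γ

/-- The Sobolev (`H^s`) wave front set of a distribution on `ℝ^d`. -/
def sobolevWF (u : Distr d) (s : ℝ) : Set (Ed d × Ed d) :=
  {p | p.2 ≠ 0 ∧ ¬ ∃ φ : Ed d → ℝ, IsTestFunction φ ∧ φ p.1 ≠ 0 ∧
    ∃ Γ : Set (Ed d), IsOpen Γ ∧ IsConicSet Γ ∧ p.2 ∈ Γ ∧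
      (∫⁻ ξ in Γ, japBr ξ s * (‖distFourier (mulD φ u) ξ‖₊ : ℝ≥0∞) ^ 2) < ∞}

/-- A distribution with compact support. -/
def DistrHasCompactSupport (u : Distr d) : Prop :=
  ∃ K : Set (Ed d), IsCompact K ∧
    ∀ ψ, IsTestFunction ψ → (∀ x ∈ K, ψ x = 0) → u ψ = 0

/-- The singular support of a distribution. -/
def singSupp (u : Distr d) : Set (Ed d) :=
  {x | ¬ ∃ U : Set (Ed d), IsOpen U ∧ x ∈ U ∧ ∃ h : Ed d → ℝ, ContDiffOn ℝ (⊤ : ℕ∞) h U ∧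
    ∀ ψ, IsTestFunction ψ → tsupport ψ ⊆ U → u ψ = ∫ y, h y * ψ y}

/-- The singular support of a function: points with no neighbourhood on which it is smooth. -/
def funSingSupp (f : Ed d → ℝ) : Set (Ed d) :=
  {x | ¬ ∃ U : Set (Ed d), IsOpen U ∧ x ∈ U ∧ ContDiffOn ℝ (⊤ : ℕ∞) f U}

/-- A mollifier: a test function supported in the unit ball with total integral 1. -/
def IsMollifier (ρ : Ed d → ℝ) : Prop :=
  IsTestFunction ρ ∧ tsupport ρ ⊆ Metric.ball (0 : Ed d) 1 ∧ (∫ x, ρ x) = 1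

/-- The mollification `(u * ρ_ε)(x)`. -/
def mollifyAt (u : Distr d) (ρ : Ed d → ℝ) (ε : ℝ) (x : Ed d) : ℝ :=
  u (fun y => ε ^ (-(d : ℤ)) * ρ (ε⁻¹ • (x - y)))

/-- `w` is the canonical product `f·g = Δ*(f ⊗ g)`: for every mollifier, the products of
the mollifications converge to `w`. -/
def IsCanonicalProduct (f g w : Distr d) : Prop :=
  ∀ ρ : Ed d → ℝ, IsMollifier ρ → ∀ ψ : Ed d → ℝ, IsTestFunction ψ →
    Tendsto (fun ε : ℝ => ∫ x, mollifyAt f ρ ε x * mollifyAt g ρ ε x * ψ x)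
      (𝓝[>] (0 : ℝ)) (𝓝 (w ψ))

/-- Canonical product on an open subset `U` of `ℝ^d`. -/
def IsCanonicalProductOn (f g w : Distr d) (U : Set (Ed d)) : Prop :=
  ∀ ρ : Ed d → ℝ, IsMollifier ρ → ∀ ψ : Ed d → ℝ, IsTestFunction ψ → tsupport ψ ⊆ U →
    Tendsto (fun ε : ℝ => ∫ x, mollifyAt f ρ ε x * mollifyAt g ρ ε x * ψ x)
      (𝓝[>] (0 : ℝ)) (𝓝 (w ψ))

/-- Hölder regularity on an open subset `U`. -/
def HolderDistOnOpen (u : Distr d) (β : ℝ) (U : Set (Ed d)) : Prop :=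
  ∀ K : Set (Ed d), K ⊆ U → IsCompact K → ∃ C : ℝ, ∀ x ∈ K, ∀ l ∈ Set.Ioc (0 : ℝ) 1,
    ∀ φ, InBr (-(lfloor β)).toNat φ → tsupport (scaleTF φ x l) ⊆ U →
      |u (scaleTF φ x l)| ≤ C * l ^ β

/-- Precomposition with the scaling `f ↦ f^λ_{x₀}`, as a linear map. -/
def sdScaleMap (x₀ : Ed d) (l : ℝ) : (Ed d → ℝ) →ₗ[ℝ] (Ed d → ℝ) where
  toFun f := sdScaleFun f x₀ l
  map_add' f g := by funext z; simp [sdScaleFun, mul_add]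
  map_smul' c f := by funext z; simp [sdScaleFun, smul_eq_mul]; ring

/-- The scaled distribution `t^λ_{x₀}`. -/
def scaleDistr (t : Distr d) (x₀ : Ed d) (l : ℝ) : Distr d := t.comp (sdScaleMap x₀ l)

/-- Scaling degree of a distribution at a point. -/
def sdAt (t : Distr d) (x₀ : Ed d) : ℝ :=
  sInf {ω : ℝ | ∀ f : Ed d → ℝ, IsTestFunction f →
    Tendsto (fun l : ℝ => l ^ ω * scaleDistr t x₀ l f) (𝓝[>] (0 : ℝ)) (𝓝 0)}

/-- Scaling degree at `x₀` of a distribution defined away from `x₀`. -/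
def sdAtAway (t : Distr d) (x₀ : Ed d) : ℝ :=
  sInf {ω : ℝ | ∀ f : Ed d → ℝ, IsTestFunction f → x₀ ∉ tsupport f →
    Tendsto (fun l : ℝ => l ^ ω * scaleDistr t x₀ l f) (𝓝[>] (0 : ℝ)) (𝓝 0)}

/-- `te` extends `t` away from `x`: they agree on test functions supported away from `x`. -/
def ExtendsAway (te t : Distr d) (x : Ed d) : Prop :=
  ∀ ψ : Ed d → ℝ, IsTestFunction ψ → x ∉ tsupport ψ → te ψ = t ψ

/-- Equality of distributions (on test functions). -/
def DistrEq (u v : Distr d) : Prop := ∀ ψ, IsTestFunction ψ → u ψ = v ψ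

/-- A `(a,γ)`-coherent germ of distributions. -/
def IsCoherentGerm (F : Ed d → Distr d) (a γ : ℝ) : Prop :=
  ∀ r : ℕ, (r : ℝ) > -a → ∀ K : Set (Ed d), IsCompact K → ∃ C : ℝ,
    ∀ x ∈ K, ∀ y ∈ K, ∀ l ∈ Set.Ioc (0 : ℝ) 1, ∀ φ, InBr r φ →
      |F x (scaleTF φ y l) - F y (scaleTF φ y l)| ≤ C * l ^ a * (‖x - y‖ + l) ^ (γ - a)

/-- The `1`-enlargement of a set. -/
def enl1 (K : Set (Ed d)) : Set (Ed d) := {x | ∃ y ∈ K, dist x y ≤ 1}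

/-- The Dirac delta distribution at `x`. -/
def diracD (x : Ed d) : Distr d where
  toFun f := f x
  map_add' := fun _ _ => rfl
  map_smul' := fun _ _ => rfl

end

/-!
Mollifying `g = δ₀ + ∂ᵥδ_y` gives `ρ_ε x + ε⁻¹ (∂ᵥρ)_ε (x - y)`, so after the substitutions
`x = ε • u` and `x = y + ε • u` the mollified product `∫ (f ∗ ρ_ε) (g ∗ ρ_ε) ψ` becomes
`∫ H ε (ε • u) ρ u du + ε⁻¹ ∫ H ε (y + ε • u) ∂ᵥρ u du` with `H ε = (f ∗ ρ_ε) ψ`. The first term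
tends to `f 0 ψ 0`. Since `∫ ∂ᵥρ = 0`, the second one only sees the difference quotients of `H ε`
at `y` with step `ε`; for `f ∈ C¹` these extend continuously to `ε = 0` with value `d(f ψ)(y)`,
and an integration by parts against `∂ᵥρ` gives `-∂ᵥ(f ψ)(y)`. So one derivative of `f`
suffices, although `α + β = -1`.
-/

noncomputable section

section General

theorem continuous_integral_mul_of_hasCompactSupport {X Y : Type*} [TopologicalSpace X]
    [FirstCountableTopology X] [LocallyCompactSpace X] [TopologicalSpace Y] [MeasurableSpace Y]
    [OpensMeasurableSpace Y] {μ : Measure Y} [IsLocallyFiniteMeasure μ] {Φ : X → Y → ℝ}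
    (hΦ : Continuous Φ.uncurry) {ρ : Y → ℝ} (hρ : Continuous ρ) (hρs : HasCompactSupport ρ) :
    Continuous fun x => ∫ u, Φ x u * ρ u ∂μ := by
  have hsupp : ∀ x, ∫ u in tsupport ρ, Φ x u * ρ u ∂μ = ∫ u, Φ x u * ρ u ∂μ := fun x =>
    setIntegral_eq_integral_of_forall_compl_eq_zero fun u hu => by
      simp [image_eq_zero_of_notMem_tsupport hu]
  simp_rw [← hsupp]
  exact continuous_parametric_integral_of_continuous (by fun_prop) hρs

variable {E : Type*} [NormedAddCommGroup E] [NormedSpace ℝ E]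

/-- The difference quotient `(f (x + ε • u) - f x) / ε` (see `mul_stepSlope`), in a form that is
continuous also at `ε = 0`. -/
def stepSlope (f : E → ℝ) (ε : ℝ) (x u : E) : ℝ :=
  ∫ t in (0 : ℝ)..1, fderiv ℝ f (x + (t * ε) • u) u

variable {f : E → ℝ}

theorem continuous_stepSlope (hf : ContDiff ℝ 1 f) :
    Continuous fun q : ℝ × E × E => stepSlope f q.1 q.2.1 q.2.2 := by
  have hf' := hf.continuous_fderiv one_ne_zero
  exact intervalIntegral.continuous_parametric_intervalIntegral_of_continuous' (by fun_prop) 0 1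

@[simp]
theorem stepSlope_zero (x u : E) : stepSlope f 0 x u = fderiv ℝ f x u := by
  simp [stepSlope]

theorem mul_stepSlope (hf : ContDiff ℝ 1 f) (ε : ℝ) (x u : E) :
    ε * stepSlope f ε x u = f (x + ε • u) - f x := by
  have hderiv : ∀ t : ℝ, HasDerivAt (fun t : ℝ => f (x + (t * ε) • u))
      (fderiv ℝ f (x + (t * ε) • u) (ε • u)) t := fun t => by
    have hline : HasDerivAt (fun t : ℝ => x + (t * ε) • u) (ε • u) t := by
      simpa using (((hasDerivAt_id t).mul_const ε).smul_const u).const_add x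
    exact ((hf.differentiable one_ne_zero _).hasFDerivAt).comp_hasDerivAt t hline
  have hftc := intervalIntegral.integral_eq_sub_of_hasDerivAt (a := 0) (b := 1)
    (fun t _ => hderiv t)
    (by apply Continuous.intervalIntegrable; fun_prop)
  simp only [map_smul, smul_eq_mul, intervalIntegral.integral_const_mul, zero_mul, zero_smul,
    add_zero, one_mul] at hftc
  rw [stepSlope, hftc]

variable [MeasureSpace E]

/-- For `ε > 0`, `f` convolved with `ρ` rescaled to width `ε` (see `integral_mul_scaleTF_self`);
the formula also makes sense at `ε = 0`. -/
def mollify (f ρ : E → ℝ) (ε : ℝ) (x : E) : ℝ := ∫ u, f (x - ε • u) * ρ u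

variable {ρ : E → ℝ}

theorem mollify_zero (x : E) : mollify f ρ 0 x = f x * ∫ u, ρ u := by
  simp [mollify, integral_const_mul]

variable [BorelSpace E] [(volume : Measure E).IsAddHaarMeasure]

theorem mul_integral_stepSlope (hf : ContDiff ℝ 1 f) (hρ : Continuous ρ)
    (hρs : HasCompactSupport ρ) (ε : ℝ) (x u : E) :
    ε * ∫ u', stepSlope f ε (x - ε • u') u * ρ u' =
      mollify f ρ ε (x + ε • u) - mollify f ρ ε x := by
  have hint : ∀ z : E, Integrable fun u' => f (z - ε • u') * ρ u' := fun z =>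
    (by fun_prop : Continuous fun u' => f (z - ε • u') * ρ u').integrable_of_hasCompactSupport
      hρs.mul_left
  rw [mollify, mollify, ← integral_sub (hint _) (hint _), ← integral_const_mul]
  congr 1 with u'
  rw [← mul_assoc, mul_stepSlope hf, sub_add_eq_add_sub, add_sub_right_comm]
  ring

variable [FiniteDimensional ℝ E]

theorem continuous_mollify (hf : Continuous f) (hρ : Continuous ρ) (hρs : HasCompactSupport ρ) :
    Continuous (Function.uncurry (mollify f ρ)) :=
  continuous_integral_mul_of_hasCompactSupport (Φ := fun q : ℝ × E => fun u => f (q.2 - q.1 • u))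
    (by fun_prop) hρ hρs

theorem exists_continuous_slope_mollify_mul (hf : ContDiff ℝ 1 f) (hρ : Continuous ρ)
    (hρs : HasCompactSupport ρ) {ψ : E → ℝ} (hψ : ContDiff ℝ 1 ψ) (y : E) :
    ∃ S : ℝ → E → ℝ, Continuous (Function.uncurry S) ∧
      (∀ ε u, ε * S ε u =
        mollify f ρ ε (y + ε • u) * ψ (y + ε • u) - mollify f ρ ε y * ψ y) ∧
      S 0 = ⇑((∫ u, ρ u) • (ψ y • fderiv ℝ f y + f y • fderiv ℝ ψ y)) := by
  refine ⟨fun ε u => (∫ u', stepSlope f ε (y - ε • u') u * ρ u') * ψ (y + ε • u)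
    + mollify f ρ ε y * stepSlope ψ ε y u, ?_, fun ε u => ?_, ?_⟩
  · have hM := continuous_mollify hf.continuous hρ hρs
    have hf' := continuous_stepSlope hf
    have hψ' := continuous_stepSlope hψ
    refine .add (.mul ?_ (by fun_prop))
      (.mul (hM.comp (f := fun q : ℝ × E => (q.1, y)) (by fun_prop))
        (hψ'.comp (f := fun q : ℝ × E => (q.1, y, q.2)) (by fun_prop)))
    exact continuous_integral_mul_of_hasCompactSupport
      (Φ := fun q : ℝ × E => fun u' => stepSlope f q.1 (y - q.1 • u') q.2)
      (hf'.comp (f := fun p : (ℝ × E) × E => (p.1.1, y - p.1.1 • p.2, p.1.2)) (by fun_prop))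
      hρ hρs
  · rw [mul_add, ← mul_assoc, mul_integral_stepSlope hf hρ hρs, mul_left_comm, mul_stepSlope hψ]
    ring
  · ext u
    simp [mollify_zero, integral_const_mul]
    ring

theorem integral_mul_fderiv_of_hasCompactSupport {h : E → ℝ} (hh : ContDiff ℝ 1 h)
    (hρ : ContDiff ℝ 1 ρ) (hρs : HasCompactSupport ρ) (v : E) :
    ∫ u, h u * fderiv ℝ ρ u v = -∫ u, fderiv ℝ h u v * ρ u := by
  have hh' := hh.continuous_fderiv one_ne_zero
  have hρ' := hρ.continuous_fderiv one_ne_zero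
  refine integral_mul_fderiv_eq_neg_fderiv_mul_of_integrable ?_ ?_ ?_
    (fun u _ => hh.differentiable one_ne_zero u) (fun u _ => hρ.differentiable one_ne_zero u)
  · exact (by fun_prop : Continuous _).integrable_of_hasCompactSupport hρs.mul_left
  · exact (by fun_prop : Continuous _).integrable_of_hasCompactSupport
      (hρs.fderiv_apply (𝕜 := ℝ) v).mul_left
  · exact (by fun_prop : Continuous _).integrable_of_hasCompactSupport hρs.mul_left

theorem integral_fderiv_of_hasCompactSupport (hρ : ContDiff ℝ 1 ρ) (hρs : HasCompactSupport ρ)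
    (v : E) : ∫ u, fderiv ℝ ρ u v = 0 := by
  simpa using integral_mul_fderiv_of_hasCompactSupport contDiff_const hρ hρs v (h := fun _ => 1)

theorem integral_clm_mul_fderiv_of_hasCompactSupport (L : E →L[ℝ] ℝ) (hρ : ContDiff ℝ 1 ρ)
    (hρs : HasCompactSupport ρ) (v : E) :
    ∫ u, L u * fderiv ℝ ρ u v = -(L v * ∫ u, ρ u) := by
  simp [integral_mul_fderiv_of_hasCompactSupport L.contDiff hρ hρs v, integral_const_mul]

end General

section Kernels

variable {d : ℕ}

theorem IsTestFunction.contDiff_one {φ : Ed d → ℝ} (hφ : IsTestFunction φ) : ContDiff ℝ 1 φ :=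
  hφ.1.of_le (by exact_mod_cast le_top)

theorem IsTestFunction.scaleTF {ρ : Ed d → ℝ} (hρ : IsTestFunction ρ) (x : Ed d) {ε : ℝ}
    (hε : ε ≠ 0) : IsTestFunction (scaleTF ρ x ε) := by
  refine ⟨by unfold _root_.scaleTF; exact contDiff_const.mul (hρ.1.comp (by fun_prop)), ?_⟩
  have hhomeo : HasCompactSupport fun z => ρ (ε⁻¹ • (x - z)) :=
    hρ.2.comp_homeomorph ((Homeomorph.subLeft x).trans (Homeomorph.smulOfNeZero _ (inv_ne_zero hε)))
  exact hhomeo.mul_left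

theorem integral_comp_add_smul (W : Ed d → ℝ) (p : Ed d) {ε : ℝ} (hε : 0 < ε) :
    ∫ u, W (p + ε • u) = ε ^ (-(d : ℤ)) * ∫ x, W x := by
  rw [Measure.integral_comp_smul volume (fun u => W (p + u)), integral_add_left_eq_self,
    finrank_euclideanSpace_fin, abs_of_pos (by positivity), smul_eq_mul, zpow_neg, zpow_natCast]

theorem integral_mul_scaleTF (G ρ : Ed d → ℝ) (p : Ed d) {ε : ℝ} (hε : 0 < ε) :
    ∫ x, G x * scaleTF ρ x ε p = ∫ u, G (p + ε • u) * ρ u := by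
  calc ∫ x, G x * scaleTF ρ x ε p = ε ^ (-(d : ℤ)) * ∫ x, G x * ρ (ε⁻¹ • (x - p)) := by
        rw [← integral_const_mul]; congr with x; simp only [_root_.scaleTF]; ring
    _ = ∫ u, G (p + ε • u) * ρ (ε⁻¹ • (p + ε • u - p)) := (integral_comp_add_smul _ p hε).symm
    _ = ∫ u, G (p + ε • u) * ρ u := by simp [inv_smul_smul₀ hε.ne']

theorem integral_mul_scaleTF_self (f ρ : Ed d → ℝ) (x : Ed d) {ε : ℝ} (hε : 0 < ε) :
    ∫ z, f z * scaleTF ρ x ε z = mollify f ρ ε x := by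
  calc ∫ z, f z * scaleTF ρ x ε z = ε ^ (-(d : ℤ)) * ∫ z, f z * ρ (ε⁻¹ • (x - z)) := by
        rw [← integral_const_mul]; congr with z; simp only [_root_.scaleTF]; ring
    _ = ∫ u, f (x + ε • u) * ρ (ε⁻¹ • (x - (x + ε • u))) := (integral_comp_add_smul _ x hε).symm
    _ = mollify f ρ ε x := by
        rw [mollify, ← integral_neg_eq_self]
        simp [inv_smul_smul₀ hε.ne', sub_eq_add_neg]

theorem fderiv_scaleTF {ρ : Ed d → ℝ} (hρ : Differentiable ℝ ρ) (x z v : Ed d) (ε : ℝ) :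
    fderiv ℝ (scaleTF ρ x ε) z v = -(ε⁻¹ * scaleTF (fun u => fderiv ℝ ρ u v) x ε z) := by
  have hinner : HasFDerivAt (fun z : Ed d => ε⁻¹ • (x - z))
      (ε⁻¹ • -ContinuousLinearMap.id ℝ (Ed d)) z :=
    ((hasFDerivAt_id z).const_sub x).const_smul ε⁻¹
  have hscale : HasFDerivAt (scaleTF ρ x ε)
      (ε ^ (-(d : ℤ)) • (fderiv ℝ ρ (ε⁻¹ • (x - z))).comp (ε⁻¹ • -ContinuousLinearMap.id ℝ _)) z :=
    ((hρ _).hasFDerivAt.comp z hinner).const_mul _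
  rw [hscale.fderiv]
  simp only [ContinuousLinearMap.comp_neg, ContinuousLinearMap.comp_smulₛₗ, map_inv₀,
    ringHom_apply, ContinuousLinearMap.comp_id, neg_apply, smul_apply, smul_eq_mul, _root_.scaleTF]
  ring

end Kernels

section Limits

variable {d : ℕ} {ρ : Ed d → ℝ}

theorem tendsto_integral_mul_scaleTF {G : ℝ → Ed d → ℝ} (hG : Continuous (Function.uncurry G))
    (hρ : Continuous ρ) (hρs : HasCompactSupport ρ) (p : Ed d) :
    Tendsto (fun ε => ∫ x, G ε x * scaleTF ρ x ε p) (𝓝[>] 0) (𝓝 (G 0 p * ∫ u, ρ u)) := by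
  have hcont : Continuous fun ε => ∫ u, G ε (p + ε • u) * ρ u :=
    continuous_integral_mul_of_hasCompactSupport (Φ := fun ε u => G ε (p + ε • u))
      (hG.comp (f := fun q : ℝ × Ed d => (q.1, p + q.1 • q.2)) (by fun_prop)) hρ hρs
  have hlim := (hcont.continuousWithinAt (s := Ioi 0) (x := 0)).tendsto
  simp only [zero_smul, add_zero, integral_const_mul] at hlim
  refine hlim.congr' ?_
  filter_upwards [self_mem_nhdsWithin] with ε hε
  exact (integral_mul_scaleTF _ ρ p hε).symm

theorem tendsto_integral_mul_scaleTF_fderiv {G S : ℝ → Ed d → ℝ} {p : Ed d}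
    (hS : Continuous (Function.uncurry S))
    (hGS : ∀ ε > 0, ∀ u, ε * S ε u = G ε (p + ε • u) - G ε p) {L : Ed d →L[ℝ] ℝ} (hL : S 0 = L)
    (hρ : ContDiff ℝ 1 ρ) (hρs : HasCompactSupport ρ) (v : Ed d) :
    Tendsto (fun ε => ∫ x, G ε x * (ε⁻¹ * scaleTF (fun u => fderiv ℝ ρ u v) x ε p)) (𝓝[>] 0)
      (𝓝 (-(L v * ∫ u, ρ u))) := by
  have hρ' : Continuous fun u => fderiv ℝ ρ u v :=
    (hρ.continuous_fderiv one_ne_zero).clm_apply continuous_const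
  have hρ's : HasCompactSupport fun u => fderiv ℝ ρ u v := hρs.fderiv_apply (𝕜 := ℝ) v
  have hcont := continuous_integral_mul_of_hasCompactSupport (μ := volume) hS hρ' hρ's
  have hlim := (hcont.continuousWithinAt (s := Ioi 0) (x := 0)).tendsto
  rw [hL, integral_clm_mul_fderiv_of_hasCompactSupport L hρ hρs v] at hlim
  refine hlim.congr' ?_
  filter_upwards [self_mem_nhdsWithin] with ε (hε : 0 < ε)
  have hSε : Integrable fun u => S ε u * fderiv ℝ ρ u v :=
    ((hS.uncurry_left ε).mul hρ').integrable_of_hasCompactSupport hρ's.mul_left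
  calc ∫ u, S ε u * fderiv ℝ ρ u v
      = ε⁻¹ * ((ε * ∫ u, S ε u * fderiv ℝ ρ u v) + G ε p * ∫ u, fderiv ℝ ρ u v) := by
        rw [integral_fderiv_of_hasCompactSupport hρ hρs v, mul_zero, add_zero,
          inv_mul_cancel_left₀ hε.ne']
    _ = ε⁻¹ * ∫ u, (ε * S ε u + G ε p) * fderiv ℝ ρ u v := by
        rw [← integral_const_mul, ← integral_const_mul, ← integral_add (hSε.const_mul ε)
          ((hρ'.integrable_of_hasCompactSupport hρ's).const_mul _)]
        simp_rw [add_mul, mul_assoc]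
    _ = ε⁻¹ * ∫ u, G ε (p + ε • u) * fderiv ℝ ρ u v := by simp_rw [hGS ε hε, sub_add_cancel]
    _ = ∫ x, G ε x * (ε⁻¹ * scaleTF (fun u => fderiv ℝ ρ u v) x ε p) := by
        rw [← integral_mul_scaleTF _ _ p hε, ← integral_const_mul]
        simp_rw [mul_left_comm]

end Limits

section Product

variable {d : ℕ} {ρ : Ed d → ℝ} {ε : ℝ}

theorem mollifyAt_eq_mollify {F : Distr d} {f : Ed d → ℝ}
    (hF : ∀ ψ, IsTestFunction ψ → F ψ = ∫ x, f x * ψ x) (hρ : IsTestFunction ρ) (hε : 0 < ε)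
    (x : Ed d) : mollifyAt F ρ ε x = mollify f ρ ε x := by
  rw [← integral_mul_scaleTF_self f ρ x hε, ← hF _ (hρ.scaleTF x hε.ne')]
  rfl

theorem mollifyAt_dirac_add_fderiv_dirac {g : Distr d} {y v : Ed d}
    (hg : ∀ ψ, IsTestFunction ψ → g ψ = ψ 0 - fderiv ℝ ψ y v) (hρ : IsTestFunction ρ)
    (hε : ε ≠ 0) (x : Ed d) :
    mollifyAt g ρ ε x = scaleTF ρ x ε 0 + ε⁻¹ * scaleTF (fun u => fderiv ℝ ρ u v) x ε y := by
  rw [show mollifyAt g ρ ε x = g (scaleTF ρ x ε) from rfl, hg _ (hρ.scaleTF x hε),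
    fderiv_scaleTF (hρ.contDiff_one.differentiable one_ne_zero), sub_neg_eq_add]

theorem integral_mollifyAt_mul_mollifyAt_mul {f : Ed d → ℝ} (hf : Continuous f) {F : Distr d}
    (hF : ∀ ψ, IsTestFunction ψ → F ψ = ∫ x, f x * ψ x) {g : Distr d} {y v : Ed d}
    (hg : ∀ ψ, IsTestFunction ψ → g ψ = ψ 0 - fderiv ℝ ψ y v) (hρ : IsTestFunction ρ)
    {ψ : Ed d → ℝ} (hψ : IsTestFunction ψ) (hε : 0 < ε) :
    ∫ x, mollifyAt F ρ ε x * mollifyAt g ρ ε x * ψ x =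
      (∫ x, mollify f ρ ε x * ψ x * scaleTF ρ x ε 0) +
        ∫ x, mollify f ρ ε x * ψ x * (ε⁻¹ * scaleTF (fun u => fderiv ℝ ρ u v) x ε y) := by
  have hH : Continuous fun x => mollify f ρ ε x * ψ x :=
    ((continuous_mollify hf hρ.1.continuous hρ.2).uncurry_left ε).mul hψ.1.continuous
  have hHs : HasCompactSupport fun x => mollify f ρ ε x * ψ x := hψ.2.mul_left
  have hρ' : Continuous fun u => fderiv ℝ ρ u v :=
    (hρ.contDiff_one.continuous_fderiv one_ne_zero).clm_apply continuous_const
  have hρc := hρ.1.continuous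
  have hint₁ : Integrable fun x => mollify f ρ ε x * ψ x * scaleTF ρ x ε 0 :=
    (hH.mul (by unfold scaleTF; fun_prop)).integrable_of_hasCompactSupport hHs.mul_right
  have hint₂ : Integrable fun x =>
      mollify f ρ ε x * ψ x * (ε⁻¹ * scaleTF (fun u => fderiv ℝ ρ u v) x ε y) :=
    (hH.mul (by unfold scaleTF; fun_prop)).integrable_of_hasCompactSupport hHs.mul_right
  rw [← integral_add hint₁ hint₂]
  congr with x
  rw [mollifyAt_eq_mollify hF hρ hε, mollifyAt_dirac_add_fderiv_dirac hg hρ hε.ne']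
  ring

/-- `g - δ₀` stands for `∂ᵥδ_y`, which cannot be written as an element of `Distr d` directly since
`ψ ↦ fderiv ℝ ψ y v` is linear only on functions differentiable at `y`; so the product is the
Leibniz expression `f(0) δ₀ + f(y) ∂ᵥδ_y - ∂ᵥf(y) δ_y`. -/
theorem isCanonicalProduct_dirac_add_fderiv_dirac {f : Ed d → ℝ} (hf : ContDiff ℝ 1 f)
    {F : Distr d} (hF : ∀ ψ, IsTestFunction ψ → F ψ = ∫ x, f x * ψ x) {g : Distr d} {y v : Ed d}
    (hg : ∀ ψ, IsTestFunction ψ → g ψ = ψ 0 - fderiv ℝ ψ y v) :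
    IsCanonicalProduct F g
      (f 0 • diracD 0 + f y • (g - diracD 0) - fderiv ℝ f y v • diracD y) := by
  rintro ρ ⟨hρ, -, hρ1⟩ ψ hψ
  have hH : Continuous fun q : ℝ × Ed d => mollify f ρ q.1 q.2 * ψ q.2 :=
    (continuous_mollify hf.continuous hρ.1.continuous hρ.2).mul
      (hψ.1.continuous.comp continuous_snd)
  obtain ⟨S, hS, hGS, hL⟩ :=
    exists_continuous_slope_mollify_mul hf hρ.1.continuous hρ.2 hψ.contDiff_one y
  rw [hρ1, one_smul] at hL
  have hlim := (tendsto_integral_mul_scaleTF (G := fun ε x => mollify f ρ ε x * ψ x) hH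
    hρ.1.continuous hρ.2 0).add (tendsto_integral_mul_scaleTF_fderiv
      (G := fun ε x => mollify f ρ ε x * ψ x) hS (fun ε _ u => hGS ε u) hL hρ.contDiff_one hρ.2 v)
  convert hlim.congr' ?_ using 2
  · simp [mollify_zero, hρ1, hg ψ hψ, diracD]
    ring
  · filter_upwards [self_mem_nhdsWithin] with ε hε
    exact (integral_mollifyAt_mul_mollifyAt_mul hf.continuous hF hg hρ hψ hε).symm

end Product

end

theorem HolderFunLoc.contDiff_one {d : ℕ} {α : ℝ} {f : Ed d → ℝ} (hα : 1 < α)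
    (hf : HolderFunLoc α f) : ContDiff ℝ 1 f := by
  have hceil : 1 < ⌈α⌉ := Int.lt_ceil.2 (by exact_mod_cast hα)
  have hfloor : 1 ≤ (lfloor α).toNat := by unfold lfloor; omega
  exact hf.1.of_le (by exact_mod_cast hfloor)

theorem product_dirac_plus_dirac_derivative_general
    (d : ℕ) (hd : 2 < d)
    (f : Ed d → ℝ) (hf : HolderFunLoc (d : ℝ) f)
    (y : Ed d)
    (F : Distr d) (hF : ∀ ψ, IsTestFunction ψ → F ψ = ∫ x, f x * ψ x)
    (v : Ed d)
    (g : Distr d)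
    (hg : ∀ ψ : Ed d → ℝ, IsTestFunction ψ → g ψ = ψ 0 - fderiv ℝ ψ y v) :
    ∃ w : Distr d, IsCanonicalProduct F g w :=
  ⟨_, isCanonicalProduct_dirac_add_fderiv_dirac
    (hf.contDiff_one (by exact_mod_cast (by omega : 1 < d))) hF hg⟩

/-- for `d > 2`, `f ∈ C^d(ℝ^d)` with `singsupp f = {0, y}` and
`g = δ₀ + δ_y^{(1)} ∈ C^{-d-1}(ℝ^d)`, the canonical product `f·g` exists. -/
theorem product_dirac_plus_dirac_derivative
    (d : ℕ) (hd : 2 < d)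
    (f : Ed d → ℝ) (hf : HolderFunLoc (d : ℝ) f)
    (y : Ed d) (hy : y ≠ 0) (hss : funSingSupp f = {0, y})
    (F : Distr d) (hF : ∀ ψ, IsTestFunction ψ → F ψ = ∫ x, f x * ψ x)
    (v : Ed d) (hv : v ≠ 0)
    (g : Distr d)
    (hg : ∀ ψ : Ed d → ℝ, IsTestFunction ψ → g ψ = ψ 0 - fderiv ℝ ψ y v)
    (hgC : HolderDistOn g (-(d : ℝ) - 1)) :
    ∃ w : Distr d, IsCanonicalProduct F g w :=
  product_dirac_plus_dirac_derivative_general d hd f hf y F hF v g hg
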